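/- arXiv:1911.02716 — 2 statements merged into one kernel-verified Lean document; each statement's English description precedes it below -/
import Mathlib

section
/- Let M be a finite set of items, let v_1,…,v_n be monotone XOS valuations on M, let p = (p_j)_{j∈M} be a vector of nonnegative prices, and let A_1,…,A_n be a fixed-price auction outcome with prices p for the bidders 1,…,n (in some fixed order). Let 0 < δ < 1/2, let O = (O_1,…,O_n) be an allocation of pairwise disjoint subsets of M to the same bidders that is supported by a price vector q, and let M* = { j ∈ M : δ·q_j ≤ p_j < q_j/2 }. Then the welfare of the auction satisfies Σ_{i=1}^n v_i(A_i) ≥ δ · Σ_{j∈M*} q_j. -/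
open Finset

/-- A (normalized, monotone) valuation on the item set `M`. -/
def IsValuation {ι : Type*} (M : Finset ι) (v : Finset ι → ℝ) : Prop :=
  v ∅ = 0 ∧ ∀ S T : Finset ι, S ⊆ T → T ⊆ M → v S ≤ v T

/-- An XOS valuation on `M`: a pointwise maximum of finitely many nonnegative additive clauses. -/
def IsXOS {ι : Type*} (M : Finset ι) (v : Finset ι → ℝ) : Prop :=
  ∃ t : ℕ, ∃ a : Fin (t + 1) → ι → ℝ,
    (∀ r j, 0 ≤ a r j) ∧
    ∀ S ⊆ M, (∃ r, v S = ∑ j ∈ S, a r j) ∧ ∀ r, ∑ j ∈ S, a r j ≤ v S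

/-- The allocation `O` is supported by the price vector `q`: `q` is nonnegative, vanishes on
unallocated items, and for each bidder `i` there is a clause `a` of `v i`
(a nonnegative additive function dominated by `v i`, maximizing at `O i`) with `q j = a j`
on `O i`. -/
def SupportedBy {ι : Type*} {n : ℕ} (M : Finset ι) (v : Fin n → Finset ι → ℝ)
    (O : Fin n → Finset ι) (q : ι → ℝ) : Prop :=
  (∀ j, 0 ≤ q j) ∧ (∀ j, (∀ i, j ∉ O i) → q j = 0) ∧
  ∀ i, ∃ a : ι → ℝ, (∀ j, 0 ≤ a j) ∧ (∀ S ⊆ M, ∑ j ∈ S, a j ≤ v i S) ∧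
    (∑ j ∈ O i, a j = v i (O i)) ∧ ∀ j ∈ O i, q j = a j

/-- Items sold before bidder `i`'s turn. -/
def soldBefore {ι : Type*} [DecidableEq ι] {n : ℕ} (A : Fin n → Finset ι) (i : Fin n) :
    Finset ι :=
  (Finset.univ.filter (fun k => k < i)).biUnion A

/-- `A` is a fixed-price auction outcome with prices `p`: the bundles are pairwise disjoint and
each bidder `i` receives a bundle of still-available items maximizing `v i S - p (S)`. -/
def IsFixedPriceOutcome {ι : Type*} [DecidableEq ι] {n : ℕ} (M : Finset ι)
    (v : Fin n → Finset ι → ℝ) (p : ι → ℝ) (A : Fin n → Finset ι) : Prop :=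
  (∀ i i', i ≠ i' → Disjoint (A i) (A i')) ∧
  ∀ i : Fin n, A i ⊆ M \ soldBefore A i ∧
    ∀ S ⊆ M \ soldBefore A i, v i S - ∑ j ∈ S, p j ≤ v i (A i) - ∑ j ∈ A i, p j

/-- Lemma 2.1: if `A` is a fixed-price auction outcome with nonnegative prices
`p`, `O` is an allocation supported by prices `q`, `0 < δ < 1/2`, and `M*` is the set of items
`j ∈ M` with `δ·q j ≤ p j < q j / 2`, then the welfare of `A` is at least `δ · q(M*)`. -/
theorem stmt0 {ι : Type*} [DecidableEq ι] {n : ℕ} (M : Finset ι)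
    (v : Fin n → Finset ι → ℝ)
    (hval : ∀ i, IsValuation M (v i)) (hxos : ∀ i, IsXOS M (v i))
    (p : ι → ℝ) (hp : ∀ j, 0 ≤ p j)
    (A : Fin n → Finset ι) (hA : IsFixedPriceOutcome M v p A)
    (δ : ℝ) (hδ0 : 0 < δ) (hδ : δ < 1 / 2)
    (O : Fin n → Finset ι) (hOsub : ∀ i, O i ⊆ M)
    (hOdisj : ∀ i i', i ≠ i' → Disjoint (O i) (O i'))
    (q : ι → ℝ) (hq : SupportedBy M v O q)
    (Mstar : Finset ι)
    (hMstar : ∀ j, j ∈ Mstar ↔ j ∈ M ∧ δ * q j ≤ p j ∧ p j < q j / 2) :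
    ∑ i, v i (A i) ≥ δ * ∑ j ∈ Mstar, q j := by
  classical
  obtain ⟨hAdisj, hAmax⟩ := hA
  obtain ⟨hq0, hqnull, hqcl⟩ := hq
  set Sold : Finset ι := Finset.univ.biUnion A with hSoldDef
  have hSoldMem : ∀ j, j ∈ Sold ↔ ∃ i, j ∈ A i := by
    intro j; simp [hSoldDef]
  set S : Fin n → Finset ι := fun i => (O i ∩ Mstar) \ Sold with hSdef
  have hSO : ∀ i, S i ⊆ O i := fun i =>
    Finset.sdiff_subset.trans Finset.inter_subset_left
  have hSMstar : ∀ i, S i ⊆ Mstar := fun i =>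
    Finset.sdiff_subset.trans Finset.inter_subset_right
  have key : ∀ i, δ * (∑ j ∈ A i ∩ Mstar, q j) + δ * (∑ j ∈ S i, q j) ≤ v i (A i) := by
    intro i
    obtain ⟨a, ha0, haM, haO, haq⟩ := hqcl i
    have hSsub : S i ⊆ M \ soldBefore A i := by
      intro j hj
      have hjO : j ∈ O i := hSO i hj
      have hjnS : j ∉ Sold := (Finset.mem_sdiff.mp hj).2
      refine Finset.mem_sdiff.mpr ⟨hOsub i hjO, ?_⟩
      intro hcon
      simp only [soldBefore, Finset.mem_biUnion, Finset.mem_filter] at hcon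
      obtain ⟨k, _, hk⟩ := hcon
      exact hjnS ((hSoldMem j).mpr ⟨k, hk⟩)
    have h2 := (hAmax i).2 (S i) hSsub
    have h3 : ∑ j ∈ S i, q j ≤ v i (S i) := by
      have heq : ∑ j ∈ S i, q j = ∑ j ∈ S i, a j :=
        Finset.sum_congr rfl fun j hj => haq j (hSO i hj)
      rw [heq]
      exact haM _ (fun j hj => (Finset.mem_sdiff.mp (hSsub hj)).1)
    have h4 : δ * (∑ j ∈ S i, q j) ≤ ∑ j ∈ S i, q j - ∑ j ∈ S i, p j := by
      rw [Finset.mul_sum, ← Finset.sum_sub_distrib]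
      apply Finset.sum_le_sum
      intro j hj
      have hjM := (hMstar j).mp (hSMstar i hj)
      nlinarith [hq0 j, hjM.2.1, hjM.2.2]
    have h5 : δ * (∑ j ∈ A i ∩ Mstar, q j) ≤ ∑ j ∈ A i, p j := by
      calc δ * ∑ j ∈ A i ∩ Mstar, q j = ∑ j ∈ A i ∩ Mstar, δ * q j := Finset.mul_sum _ _ _
        _ ≤ ∑ j ∈ A i ∩ Mstar, p j := Finset.sum_le_sum fun j hj =>
            ((hMstar j).mp (Finset.mem_inter.mp hj).2).2.1
        _ ≤ ∑ j ∈ A i, p j := Finset.sum_le_sum_of_subset_of_nonneg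
            Finset.inter_subset_left (fun j _ _ => hp j)
    linarith
  set T : Fin n → Finset ι := fun i => (A i ∩ Mstar) ∪ S i with hTdef
  have hTsum : ∀ i, ∑ j ∈ T i, q j = ∑ j ∈ A i ∩ Mstar, q j + ∑ j ∈ S i, q j := by
    intro i
    apply Finset.sum_union
    refine Finset.disjoint_left.mpr fun j hj hj' => ?_
    exact (Finset.mem_sdiff.mp hj').2 ((hSoldMem j).mpr ⟨i, (Finset.mem_inter.mp hj).1⟩)
  have hTdisj : ∀ i i', i ≠ i' → Disjoint (T i) (T i') := by
    intro i i' hne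
    simp only [hTdef, Finset.disjoint_union_left, Finset.disjoint_union_right]
    refine ⟨⟨?_, ?_⟩, ⟨?_, ?_⟩⟩
    · exact (hAdisj i i' hne).mono Finset.inter_subset_left Finset.inter_subset_left
    · refine Finset.disjoint_left.mpr fun j hj hj' => ?_
      exact (Finset.mem_sdiff.mp hj).2 ((hSoldMem j).mpr ⟨i', (Finset.mem_inter.mp hj').1⟩)
    · refine Finset.disjoint_left.mpr fun j hj hj' => ?_
      exact (Finset.mem_sdiff.mp hj').2 ((hSoldMem j).mpr ⟨i, (Finset.mem_inter.mp hj).1⟩)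
    · exact (hOdisj i i' hne).mono (hSO i) (hSO i')
  set U : Finset ι := Finset.univ.biUnion T with hUdef
  have hMq : ∑ j ∈ Mstar, q j ≤ ∑ j ∈ U, q j := by
    have hsplit : ∑ j ∈ Mstar, q j = ∑ j ∈ Mstar ∩ U, q j + ∑ j ∈ Mstar \ U, q j :=
      (Finset.sum_inter_add_sum_sdiff _ _ _).symm
    rw [hsplit]
    have hz : ∑ j ∈ Mstar \ U, q j = 0 := by
      apply Finset.sum_eq_zero
      intro j hj
      obtain ⟨hjM, hjU⟩ := Finset.mem_sdiff.mp hj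
      apply hqnull
      intro i hji
      by_cases hs : j ∈ Sold
      · obtain ⟨k, hk⟩ := (hSoldMem j).mp hs
        exact hjU (Finset.mem_biUnion.mpr ⟨k, Finset.mem_univ k,
          Finset.mem_union_left _ (Finset.mem_inter.mpr ⟨hk, hjM⟩)⟩)
      · exact hjU (Finset.mem_biUnion.mpr ⟨i, Finset.mem_univ i,
          Finset.mem_union_right _ (Finset.mem_sdiff.mpr
            ⟨Finset.mem_inter.mpr ⟨hji, hjM⟩, hs⟩)⟩)
    rw [hz, add_zero]
    exact Finset.sum_le_sum_of_subset_of_nonneg Finset.inter_subset_right (fun j _ _ => hq0 j)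
  have hUsum : ∑ j ∈ U, q j = ∑ i, ∑ j ∈ T i, q j :=
    Finset.sum_biUnion (fun i _ i' _ h => hTdisj i i' h)
  rw [ge_iff_le]
  calc δ * ∑ j ∈ Mstar, q j ≤ δ * ∑ j ∈ U, q j := by
        exact mul_le_mul_of_nonneg_left hMq hδ0.le
    _ = ∑ i, (δ * ∑ j ∈ A i ∩ Mstar, q j + δ * ∑ j ∈ S i, q j) := by
        rw [hUsum, Finset.mul_sum]
        exact Finset.sum_congr rfl fun i _ => by rw [hTsum i]; ring
    _ ≤ ∑ i, v i (A i) := Finset.sum_le_sum fun i _ => key i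
end

section
/- Let M be a finite set of items, let v_1,…,v_n be valuations on M, let p be a price vector, and let A_1,…,A_n be a fixed-price auction outcome with prices p, with sold set A. Let O = (O_1,…,O_n) be any allocation of pairwise disjoint subsets of M to the same bidders. Then Σ_{i=1}^n v_i(A_i) ≥ Σ_{j∈A} p_j + Σ_{i=1}^n ( v_i(O_i \ A) − p(O_i \ A) ). -/
open Finset

/-- for any fixed-price auction outcome `A` with sold set
`⋃ i, A i` and any allocation `O`, the welfare of `A` is at least the revenue of `A` plus the
total residual utility of the unsold parts of `O`. -/
theorem stmt2 {ι : Type*} [DecidableEq ι] {n : ℕ} (M : Finset ι)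
    (v : Fin n → Finset ι → ℝ)
    (hval : ∀ i, IsValuation M (v i))
    (p : ι → ℝ)
    (A : Fin n → Finset ι) (hA : IsFixedPriceOutcome M v p A)
    (O : Fin n → Finset ι) (hOsub : ∀ i, O i ⊆ M)
    (hOdisj : ∀ i i', i ≠ i' → Disjoint (O i) (O i')) :
    ∑ i, v i (A i) ≥
      (∑ j ∈ Finset.univ.biUnion A, p j) +
        ∑ i, (v i (O i \ Finset.univ.biUnion A) -
          ∑ j ∈ O i \ Finset.univ.biUnion A, p j) := by
  obtain ⟨hdisj, hopt⟩ := hA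
  have hsum : ∑ j ∈ Finset.univ.biUnion A, p j = ∑ i, ∑ j ∈ A i, p j := by
    apply Finset.sum_biUnion
    intro i _ i' _ hne
    exact hdisj i i' hne
  have key : ∀ i : Fin n,
      v i (O i \ Finset.univ.biUnion A) - ∑ j ∈ O i \ Finset.univ.biUnion A, p j ≤
        v i (A i) - ∑ j ∈ A i, p j := by
    intro i
    apply (hopt i).2
    intro j hj
    simp only [Finset.mem_sdiff] at hj ⊢
    refine ⟨hOsub i hj.1, fun hmem => hj.2 ?_⟩
    simp only [soldBefore, Finset.mem_biUnion, Finset.mem_filter] at hmem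
    obtain ⟨k, _, hk⟩ := hmem
    exact Finset.mem_biUnion.mpr ⟨k, Finset.mem_univ k, hk⟩
  have hle := Finset.sum_le_sum (fun i (_ : i ∈ Finset.univ) => key i)
  rw [Finset.sum_sub_distrib, Finset.sum_sub_distrib] at hle
  rw [hsum, Finset.sum_sub_distrib]
  linarith
end
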